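/- For every (x2, x4, x6) ∈ (1/2, ∞)³, the determinant of the 3×3 matrix J = [[2x4 − 1/(2x4) + x4/(2x2²), 2x2 − 1/(2x2) + x2/(2x4²), 0], [0, 2x6 − 1/(2x6) + x6/(2x4²), 2x4 − 1/(2x4) + x4/(2x6²)], [2x6 − 1/(2x6) + x6/(2x2²), 0, 2x2 − 1/(2x2) + x2/(2x6²)]] is strictly positive. (This matrix is the Jacobian matrix of the map G(x2,x4,x6) = (2x2x4 − (1/2)(x2/x4 + x4/x2), 2x4x6 − (1/2)(x4/x6 + x6/x4), 2x2x6 − (1/2)(x2/x6 + x6/x2)).) -/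
import Mathlib

lemma aux (a b : ℝ) (ha : 1/2 < a) (hb : 1/2 < b) :
    0 < 2*a - 1/(2*a) + a/(2*b^2) := by
  have ha0 : 0 < a := by linarith
  have hb0 : 0 < b := by linarith
  have h1 : 1/(2*a) < 2*a := by
    rw [div_lt_iff₀ (by linarith)]
    nlinarith
  have h2 : 0 < a/(2*b^2) := by positivity
  linarith

/-- The determinant of the Jacobian matrix of G is strictly positive
on (1/2,∞)³. -/
theorem stmt_4 (x2 x4 x6 : ℝ) (h2 : 1/2 < x2) (h4 : 1/2 < x4) (h6 : 1/2 < x6) :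
    0 < Matrix.det
      !![2*x4 - 1/(2*x4) + x4/(2*x2^2), 2*x2 - 1/(2*x2) + x2/(2*x4^2), 0;
         0, 2*x6 - 1/(2*x6) + x6/(2*x4^2), 2*x4 - 1/(2*x4) + x4/(2*x6^2);
         2*x6 - 1/(2*x6) + x6/(2*x2^2), 0, 2*x2 - 1/(2*x2) + x2/(2*x6^2)] := by
  simp [Matrix.det_fin_three]
  have a1 := aux x4 x2 h4 h2
  have a2 := aux x2 x4 h2 h4
  have a3 := aux x6 x4 h6 h4
  have a4 := aux x4 x6 h4 h6
  have a5 := aux x6 x2 h6 h2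
  have a6 := aux x2 x6 h2 h6
  ring_nf at a1 a2 a3 a4 a5 a6 ⊢
  nlinarith [mul_pos (mul_pos a1 a3) a6, mul_pos (mul_pos a2 a4) a5]
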